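/- Entropy equality for smooth solutions of the relativistic hydrodynamics equations with Lorentz-force source: fix γ > 1 and r ∈ ℝ, and let ρ, p : ℝ × ℝ² → ℝ be positive, u : ℝ × ℝ² → ℝ³ with |u(t,x,y)| < 1 everywhere, and E, B : ℝ × ℝ² → ℝ³, all continuously differentiable. Set Γ = 1/√(1−|u|²), h = 1 + (γ/(γ−1))(p/ρ), D = ρΓ, m = ρhΓ²u, 𝓔 = ρhΓ² − p, and suppose the conservation laws hold pointwise: ∂_t D + ∂_x(D uˣ) + ∂_y(D u^y) = 0; ∂_t m + ∂_x(m uˣ + p e_x) + ∂_y(m u^y + p e_y) = rΓρ(E + u×B); ∂_t 𝓔 + ∂_x((𝓔 + p)uˣ) + ∂_y((𝓔 + p)u^y) = rΓρ(u·E), where e_x = (1,0,0), e_y = (0,1,0). Then, with s = ln(p ρ^{−γ}), η = −ρΓs/(γ−1), qˣ = −ρΓs uˣ/(γ−1), q^y = −ρΓs u^y/(γ−1), the entropy equality ∂_t η + ∂_x qˣ + ∂_y q^y = 0 holds pointwise on ℝ × ℝ². -/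

import Mathlib

set_option maxRecDepth 16000
set_option maxHeartbeats 2000000


/-- Partial derivative in time of a field `f(t, x, y)`. -/
noncomputable def pt (f : ℝ → ℝ → ℝ → ℝ) (t x y : ℝ) : ℝ := deriv (fun τ => f τ x y) t

/-- Partial derivative in `x` of a field `f(t, x, y)`. -/
noncomputable def px (f : ℝ → ℝ → ℝ → ℝ) (t x y : ℝ) : ℝ := deriv (fun s => f t s y) x

/-- Partial derivative in `y` of a field `f(t, x, y)`. -/
noncomputable def py (f : ℝ → ℝ → ℝ → ℝ) (t x y : ℝ) : ℝ := deriv (fun s => f t x s) y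

/-- Lorentz factor field `Γ = 1/√(1 − |u|²)`. -/
noncomputable def Gam (ux uy uz : ℝ → ℝ → ℝ → ℝ) (t x y : ℝ) : ℝ :=
  1 / Real.sqrt (1 - (ux t x y ^ 2 + uy t x y ^ 2 + uz t x y ^ 2))

/-- Specific enthalpy field `h = 1 + (γ/(γ−1))(p/ρ)`. -/
noncomputable def enth (γ : ℝ) (ρ p : ℝ → ℝ → ℝ → ℝ) (t x y : ℝ) : ℝ :=
  1 + (γ / (γ - 1)) * (p t x y / ρ t x y)

/-- Conserved density `D = ρΓ`. -/
noncomputable def Df (ρ ux uy uz : ℝ → ℝ → ℝ → ℝ) (t x y : ℝ) : ℝ :=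
  ρ t x y * Gam ux uy uz t x y

/-- Momentum density `m = ρhΓ²u` (one component, `u` being the given component field). -/
noncomputable def mom (γ : ℝ) (ρ ux uy uz p ucomp : ℝ → ℝ → ℝ → ℝ) (t x y : ℝ) : ℝ :=
  ρ t x y * enth γ ρ p t x y * (Gam ux uy uz t x y) ^ 2 * ucomp t x y

/-- Total energy density `𝓔 = ρhΓ² − p`. -/
noncomputable def Ener (γ : ℝ) (ρ ux uy uz p : ℝ → ℝ → ℝ → ℝ) (t x y : ℝ) : ℝ :=
  ρ t x y * enth γ ρ p t x y * (Gam ux uy uz t x y) ^ 2 - p t x y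

/-- Thermodynamic entropy `s = ln(p ρ^{−γ})`. -/
noncomputable def entr (γ : ℝ) (ρ p : ℝ → ℝ → ℝ → ℝ) (t x y : ℝ) : ℝ :=
  Real.log (p t x y * ρ t x y ^ (-γ))

/-- Entropy function `η = −ρΓs/(γ−1)` times a velocity factor `w` (take `w ≡ 1` for `η`
itself and `w = u^d` for the entropy flux `q^d`). -/
noncomputable def entFlux (γ : ℝ) (ρ ux uy uz p w : ℝ → ℝ → ℝ → ℝ) (t x y : ℝ) : ℝ :=
  -(ρ t x y * Gam ux uy uz t x y * entr γ ρ p t x y * w t x y) / (γ - 1)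


lemma hasDerivAt_invSqrt (U V W : ℝ → ℝ) (τ u' v' w' : ℝ)
    (hU : HasDerivAt U u' τ) (hV : HasDerivAt V v' τ) (hW : HasDerivAt W w' τ)
    (h1 : U τ ^ 2 + V τ ^ 2 + W τ ^ 2 < 1) :
    HasDerivAt (fun σ => 1 / Real.sqrt (1 - (U σ ^ 2 + V σ ^ 2 + W σ ^ 2)))
      ((1 / Real.sqrt (1 - (U τ ^ 2 + V τ ^ 2 + W τ ^ 2))) ^ 3
        * (U τ * u' + V τ * v' + W τ * w')) τ := by
  have hpos : 0 < 1 - (U τ ^ 2 + V τ ^ 2 + W τ ^ 2) := by linarith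
  have hq : HasDerivAt (fun σ => 1 - (U σ ^ 2 + V σ ^ 2 + W σ ^ 2))
      (-(2 * U τ * u' + 2 * V τ * v' + 2 * W τ * w')) τ := by
    have h := (((hU.fun_pow 2).fun_add (hV.fun_pow 2)).fun_add (hW.fun_pow 2)).const_sub 1
    refine h.congr_deriv ?_
    norm_num
  have hsq := hq.sqrt (ne_of_gt hpos)
  have hs0 : Real.sqrt (1 - (U τ ^ 2 + V τ ^ 2 + W τ ^ 2)) ≠ 0 :=
    ne_of_gt (Real.sqrt_pos.mpr hpos)
  have h := (hasDerivAt_const τ (1:ℝ)).fun_div hsq hs0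
  refine h.congr_deriv ?_
  ring

lemma hasDerivAt_enthalpy (γ : ℝ) (R P : ℝ → ℝ) (τ r' p' : ℝ)
    (hR : HasDerivAt R r' τ) (hP : HasDerivAt P p' τ) (hR0 : R τ ≠ 0) :
    HasDerivAt (fun σ => 1 + γ / (γ - 1) * (P σ / R σ))
      (γ / (γ - 1) * ((p' * R τ - P τ * r') / R τ ^ 2)) τ :=
  ((hP.div hR hR0).const_mul (γ / (γ - 1))).const_add 1

lemma hasDerivAt_entropy (γ : ℝ) (R P : ℝ → ℝ) (τ r' p' : ℝ)
    (hR : HasDerivAt R r' τ) (hP : HasDerivAt P p' τ)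
    (hRpos : ∀ σ, 0 < R σ) (hPpos : ∀ σ, 0 < P σ) :
    HasDerivAt (fun σ => Real.log (P σ * R σ ^ (-γ)))
      (p' / P τ - γ * (r' / R τ)) τ := by
  have hfun : (fun σ => Real.log (P σ * R σ ^ (-γ)))
      = fun σ => Real.log (P σ) - γ * Real.log (R σ) := by
    funext σ
    rw [Real.log_mul (hPpos σ).ne' (Real.rpow_pos_of_pos (hRpos σ) _).ne',
      Real.log_rpow (hRpos σ)]
    ring
  rw [hfun]
  exact (hP.log (hPpos τ).ne').sub ((hR.log (hRpos τ).ne').const_mul γ)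

lemma restrict_t {f : ℝ → ℝ → ℝ → ℝ}
    (hf : ContDiff ℝ 1 (fun q : ℝ × ℝ × ℝ => f q.1 q.2.1 q.2.2)) (x y t : ℝ) :
    HasDerivAt (fun τ => f τ x y) (deriv (fun τ => f τ x y) t) t := by
  have h1 : DifferentiableAt ℝ (fun q : ℝ × ℝ × ℝ => f q.1 q.2.1 q.2.2) (t, x, y) :=
    (hf.differentiable one_ne_zero).differentiableAt
  have h2 : DifferentiableAt ℝ (fun τ : ℝ => ((τ, x, y) : ℝ × ℝ × ℝ)) t :=
    differentiableAt_id.prodMk (differentiableAt_const _)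
  have h3 : DifferentiableAt ℝ (fun τ => f τ x y) t := by have := h1.comp t h2; exact this
  exact h3.hasDerivAt

lemma restrict_x {f : ℝ → ℝ → ℝ → ℝ}
    (hf : ContDiff ℝ 1 (fun q : ℝ × ℝ × ℝ => f q.1 q.2.1 q.2.2)) (t y x : ℝ) :
    HasDerivAt (fun s => f t s y) (deriv (fun s => f t s y) x) x := by
  have h1 : DifferentiableAt ℝ (fun q : ℝ × ℝ × ℝ => f q.1 q.2.1 q.2.2) (t, x, y) :=
    (hf.differentiable one_ne_zero).differentiableAt
  have h2 : DifferentiableAt ℝ (fun s : ℝ => ((t, s, y) : ℝ × ℝ × ℝ)) x :=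
    (differentiableAt_const _).prodMk (differentiableAt_id.prodMk (differentiableAt_const _))
  have h3 : DifferentiableAt ℝ (fun s => f t s y) x := by have := h1.comp x h2; exact this
  exact h3.hasDerivAt

lemma restrict_y {f : ℝ → ℝ → ℝ → ℝ}
    (hf : ContDiff ℝ 1 (fun q : ℝ × ℝ × ℝ => f q.1 q.2.1 q.2.2)) (t x y : ℝ) :
    HasDerivAt (fun s => f t x s) (deriv (fun s => f t x s) y) y := by
  have h1 : DifferentiableAt ℝ (fun q : ℝ × ℝ × ℝ => f q.1 q.2.1 q.2.2) (t, x, y) :=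
    (hf.differentiable one_ne_zero).differentiableAt
  have h2 : DifferentiableAt ℝ (fun s : ℝ => ((t, x, s) : ℝ × ℝ × ℝ)) y :=
    (differentiableAt_const _).prodMk ((differentiableAt_const _).prodMk differentiableAt_id)
  have h3 : DifferentiableAt ℝ (fun s => f t x s) y := by have := h1.comp y h2; exact this
  exact h3.hasDerivAt

/-- Entropy equality for smooth solutions of the 2-D relativistic hydrodynamics equations
with Lorentz-force source terms: the source contributions cancel and
`∂_t η + ∂_x qˣ + ∂_y q^y = 0` pointwise. -/
theorem entropy_equality_smooth
    (γ r : ℝ) (hγ : 1 < γ)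
    (ρ p ux uy uz E₁ E₂ E₃ B₁ B₂ B₃ : ℝ → ℝ → ℝ → ℝ)
    (hρpos : ∀ t x y : ℝ, 0 < ρ t x y) (hppos : ∀ t x y : ℝ, 0 < p t x y)
    (huadm : ∀ t x y : ℝ, ux t x y ^ 2 + uy t x y ^ 2 + uz t x y ^ 2 < 1)
    (hρ : ContDiff ℝ 1 (fun q : ℝ × ℝ × ℝ => ρ q.1 q.2.1 q.2.2))
    (hp : ContDiff ℝ 1 (fun q : ℝ × ℝ × ℝ => p q.1 q.2.1 q.2.2))
    (hux : ContDiff ℝ 1 (fun q : ℝ × ℝ × ℝ => ux q.1 q.2.1 q.2.2))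
    (huy : ContDiff ℝ 1 (fun q : ℝ × ℝ × ℝ => uy q.1 q.2.1 q.2.2))
    (huz : ContDiff ℝ 1 (fun q : ℝ × ℝ × ℝ => uz q.1 q.2.1 q.2.2))
    (hE₁ : ContDiff ℝ 1 (fun q : ℝ × ℝ × ℝ => E₁ q.1 q.2.1 q.2.2))
    (hE₂ : ContDiff ℝ 1 (fun q : ℝ × ℝ × ℝ => E₂ q.1 q.2.1 q.2.2))
    (hE₃ : ContDiff ℝ 1 (fun q : ℝ × ℝ × ℝ => E₃ q.1 q.2.1 q.2.2))
    (hB₁ : ContDiff ℝ 1 (fun q : ℝ × ℝ × ℝ => B₁ q.1 q.2.1 q.2.2))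
    (hB₂ : ContDiff ℝ 1 (fun q : ℝ × ℝ × ℝ => B₂ q.1 q.2.1 q.2.2))
    (hB₃ : ContDiff ℝ 1 (fun q : ℝ × ℝ × ℝ => B₃ q.1 q.2.1 q.2.2))
    (hmass : ∀ t x y : ℝ,
      pt (Df ρ ux uy uz) t x y
        + px (fun t x y => Df ρ ux uy uz t x y * ux t x y) t x y
        + py (fun t x y => Df ρ ux uy uz t x y * uy t x y) t x y = 0)
    (hmomx : ∀ t x y : ℝ,
      pt (mom γ ρ ux uy uz p ux) t x y
        + px (fun t x y => mom γ ρ ux uy uz p ux t x y * ux t x y + p t x y) t x y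
        + py (fun t x y => mom γ ρ ux uy uz p ux t x y * uy t x y) t x y
      = r * Gam ux uy uz t x y * ρ t x y
          * (E₁ t x y + (uy t x y * B₃ t x y - uz t x y * B₂ t x y)))
    (hmomy : ∀ t x y : ℝ,
      pt (mom γ ρ ux uy uz p uy) t x y
        + px (fun t x y => mom γ ρ ux uy uz p uy t x y * ux t x y) t x y
        + py (fun t x y => mom γ ρ ux uy uz p uy t x y * uy t x y + p t x y) t x y
      = r * Gam ux uy uz t x y * ρ t x y
          * (E₂ t x y + (uz t x y * B₁ t x y - ux t x y * B₃ t x y)))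
    (hmomz : ∀ t x y : ℝ,
      pt (mom γ ρ ux uy uz p uz) t x y
        + px (fun t x y => mom γ ρ ux uy uz p uz t x y * ux t x y) t x y
        + py (fun t x y => mom γ ρ ux uy uz p uz t x y * uy t x y) t x y
      = r * Gam ux uy uz t x y * ρ t x y
          * (E₃ t x y + (ux t x y * B₂ t x y - uy t x y * B₁ t x y)))
    (hener : ∀ t x y : ℝ,
      pt (Ener γ ρ ux uy uz p) t x y
        + px (fun t x y => (Ener γ ρ ux uy uz p t x y + p t x y) * ux t x y) t x y
        + py (fun t x y => (Ener γ ρ ux uy uz p t x y + p t x y) * uy t x y) t x y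
      = r * Gam ux uy uz t x y * ρ t x y
          * (ux t x y * E₁ t x y + uy t x y * E₂ t x y + uz t x y * E₃ t x y)) :
    ∀ t x y : ℝ,
      pt (entFlux γ ρ ux uy uz p (fun _ _ _ => 1)) t x y
        + px (entFlux γ ρ ux uy uz p ux) t x y
        + py (entFlux γ ρ ux uy uz p uy) t x y = 0 := by
  intro t x y
  -- directional derivatives of the primitive fields
  obtain ⟨aT, haT⟩ : ∃ d, HasDerivAt (fun τ => ρ τ x y) d t := ⟨_, restrict_t hρ x y t⟩
  obtain ⟨bT, hbT⟩ : ∃ d, HasDerivAt (fun τ => p τ x y) d t := ⟨_, restrict_t hp x y t⟩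
  obtain ⟨uT, huT⟩ : ∃ d, HasDerivAt (fun τ => ux τ x y) d t := ⟨_, restrict_t hux x y t⟩
  obtain ⟨vT, hvT⟩ : ∃ d, HasDerivAt (fun τ => uy τ x y) d t := ⟨_, restrict_t huy x y t⟩
  obtain ⟨wT, hwT⟩ : ∃ d, HasDerivAt (fun τ => uz τ x y) d t := ⟨_, restrict_t huz x y t⟩
  obtain ⟨aX, haX⟩ : ∃ d, HasDerivAt (fun s => ρ t s y) d x := ⟨_, restrict_x hρ t y x⟩
  obtain ⟨bX, hbX⟩ : ∃ d, HasDerivAt (fun s => p t s y) d x := ⟨_, restrict_x hp t y x⟩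
  obtain ⟨uX, huX⟩ : ∃ d, HasDerivAt (fun s => ux t s y) d x := ⟨_, restrict_x hux t y x⟩
  obtain ⟨vX, hvX⟩ : ∃ d, HasDerivAt (fun s => uy t s y) d x := ⟨_, restrict_x huy t y x⟩
  obtain ⟨wX, hwX⟩ : ∃ d, HasDerivAt (fun s => uz t s y) d x := ⟨_, restrict_x huz t y x⟩
  obtain ⟨aY, haY⟩ : ∃ d, HasDerivAt (fun s => ρ t x s) d y := ⟨_, restrict_y hρ t x y⟩
  obtain ⟨bY, hbY⟩ : ∃ d, HasDerivAt (fun s => p t x s) d y := ⟨_, restrict_y hp t x y⟩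
  obtain ⟨uY, huY⟩ : ∃ d, HasDerivAt (fun s => ux t x s) d y := ⟨_, restrict_y hux t x y⟩
  obtain ⟨vY, hvY⟩ : ∃ d, HasDerivAt (fun s => uy t x s) d y := ⟨_, restrict_y huy t x y⟩
  obtain ⟨wY, hwY⟩ : ∃ d, HasDerivAt (fun s => uz t x s) d y := ⟨_, restrict_y huz t x y⟩
  -- Lorentz factor derivatives
  have hGT := hasDerivAt_invSqrt _ _ _ t uT vT wT huT hvT hwT (huadm t x y)
  have hGX := hasDerivAt_invSqrt _ _ _ x uX vX wX huX hvX hwX (huadm t x y)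
  have hGY := hasDerivAt_invSqrt _ _ _ y uY vY wY huY hvY hwY (huadm t x y)
  beta_reduce at hGT hGX hGY
  have hGT2 : HasDerivAt (fun σ => (1 / Real.sqrt (1 - (ux σ x y ^ 2 + uy σ x y ^ 2 + uz σ x y ^ 2))) ^ 2)
      (2 * (1 / Real.sqrt (1 - (ux t x y ^ 2 + uy t x y ^ 2 + uz t x y ^ 2))) * ((1 / Real.sqrt (1 - (ux t x y ^ 2 + uy t x y ^ 2 + uz t x y ^ 2))) ^ 3 * (ux t x y * uT + uy t x y * vT + uz t x y * wT))) t := by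
    refine (hGT.fun_pow 2).congr_deriv ?_
    norm_num
  have hGX2 : HasDerivAt (fun σ => (1 / Real.sqrt (1 - (ux t σ y ^ 2 + uy t σ y ^ 2 + uz t σ y ^ 2))) ^ 2)
      (2 * (1 / Real.sqrt (1 - (ux t x y ^ 2 + uy t x y ^ 2 + uz t x y ^ 2))) * ((1 / Real.sqrt (1 - (ux t x y ^ 2 + uy t x y ^ 2 + uz t x y ^ 2))) ^ 3 * (ux t x y * uX + uy t x y * vX + uz t x y * wX))) x := by
    refine (hGX.fun_pow 2).congr_deriv ?_
    norm_num
  have hGY2 : HasDerivAt (fun σ => (1 / Real.sqrt (1 - (ux t x σ ^ 2 + uy t x σ ^ 2 + uz t x σ ^ 2))) ^ 2)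
      (2 * (1 / Real.sqrt (1 - (ux t x y ^ 2 + uy t x y ^ 2 + uz t x y ^ 2))) * ((1 / Real.sqrt (1 - (ux t x y ^ 2 + uy t x y ^ 2 + uz t x y ^ 2))) ^ 3 * (ux t x y * uY + uy t x y * vY + uz t x y * wY))) y := by
    refine (hGY.fun_pow 2).congr_deriv ?_
    norm_num
  -- enthalpy derivatives
  have hHT := hasDerivAt_enthalpy γ _ _ t aT bT haT hbT (hρpos t x y).ne'
  have hHX := hasDerivAt_enthalpy γ _ _ x aX bX haX hbX (hρpos t x y).ne'
  have hHY := hasDerivAt_enthalpy γ _ _ y aY bY haY hbY (hρpos t x y).ne'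
  beta_reduce at hHT hHX hHY
  -- entropy derivatives
  have hST := hasDerivAt_entropy γ _ _ t aT bT haT hbT (fun σ => hρpos σ x y) (fun σ => hppos σ x y)
  have hSX := hasDerivAt_entropy γ _ _ x aX bX haX hbX (fun σ => hρpos t σ y) (fun σ => hppos t σ y)
  have hSY := hasDerivAt_entropy γ _ _ y aY bY haY hbY (fun σ => hρpos t x σ) (fun σ => hppos t x σ)
  beta_reduce at hST hSX hSY
  -- specialize the conservation laws
  have hM := hmass t x y
  have hXe := hmomx t x y
  have hYe := hmomy t x y
  have hZe := hmomz t x y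
  have hEe := hener t x y
  have hadm := huadm t x y
  simp only [pt, px, py, Df, mom, Ener, entFlux, enth, Gam, entr, mul_one] at hM hXe hYe hZe hEe ⊢
  rw [(haT.fun_mul hGT).deriv, ((haX.fun_mul hGX).fun_mul huX).deriv, ((haY.fun_mul hGY).fun_mul hvY).deriv] at hM
  rw [(((haT.fun_mul hHT).fun_mul hGT2).fun_mul huT).deriv,
    (((((haX.fun_mul hHX).fun_mul hGX2).fun_mul huX).fun_mul huX).fun_add hbX).deriv,
    ((((haY.fun_mul hHY).fun_mul hGY2).fun_mul huY).fun_mul hvY).deriv] at hXe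
  rw [(((haT.fun_mul hHT).fun_mul hGT2).fun_mul hvT).deriv,
    ((((haX.fun_mul hHX).fun_mul hGX2).fun_mul hvX).fun_mul huX).deriv,
    (((((haY.fun_mul hHY).fun_mul hGY2).fun_mul hvY).fun_mul hvY).fun_add hbY).deriv] at hYe
  rw [(((haT.fun_mul hHT).fun_mul hGT2).fun_mul hwT).deriv,
    ((((haX.fun_mul hHX).fun_mul hGX2).fun_mul hwX).fun_mul huX).deriv,
    ((((haY.fun_mul hHY).fun_mul hGY2).fun_mul hwY).fun_mul hvY).deriv] at hZe
  rw [(((haT.fun_mul hHT).fun_mul hGT2).fun_sub hbT).deriv,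
    (((((haX.fun_mul hHX).fun_mul hGX2).fun_sub hbX).fun_add hbX).fun_mul huX).deriv,
    (((((haY.fun_mul hHY).fun_mul hGY2).fun_sub hbY).fun_add hbY).fun_mul hvY).deriv] at hEe
  rw [(((haT.fun_mul hGT).fun_mul hST).fun_neg.div_const (γ - 1)).deriv,
    ((((haX.fun_mul hGX).fun_mul hSX).fun_mul huX).fun_neg.div_const (γ - 1)).deriv,
    ((((haY.fun_mul hGY).fun_mul hSY).fun_mul hvY).fun_neg.div_const (γ - 1)).deriv]
  beta_reduce at hM hXe hYe hZe hEe ⊢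
  set A := ρ t x y with hAd
  set B := p t x y with hBd
  set U := ux t x y with hUd
  set V := uy t x y with hVd
  set W3 := uz t x y with hWd
  set G := 1 / Real.sqrt (1 - (U ^ 2 + V ^ 2 + W3 ^ 2)) with hGd
  set S0 := Real.log (B * A ^ (-γ)) with hSd
  set H0 := 1 + γ / (γ - 1) * (B / A) with hH0d
  set QT := γ / (γ - 1) * ((bT * A - B * aT) / A ^ 2) with hQTd
  set QX := γ / (γ - 1) * ((bX * A - B * aX) / A ^ 2) with hQXd
  set QY := γ / (γ - 1) * ((bY * A - B * aY) / A ^ 2) with hQYd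
  set ST := bT / B - γ * (aT / A) with hSTd
  set SX := bX / B - γ * (aX / A) with hSXd
  set SY := bY / B - γ * (aY / A) with hSYd
  have hA0 : A ≠ 0 := by rw [hAd]; exact (hρpos t x y).ne'
  have hB0 : B ≠ 0 := by rw [hBd]; exact (hppos t x y).ne'
  have hγ0 : γ - 1 ≠ 0 := sub_ne_zero.mpr hγ.ne'
  have h1q : 0 < 1 - (U ^ 2 + V ^ 2 + W3 ^ 2) := by linarith
  have hG0 : G ≠ 0 := by rw [hGd]; exact one_div_ne_zero (Real.sqrt_pos.mpr h1q).ne'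
  have hrel : G ^ 2 * (1 - (U ^ 2 + V ^ 2 + W3 ^ 2)) = 1 := by
    rw [hGd, div_pow, one_pow, Real.sq_sqrt h1q.le, one_div,
      inv_mul_cancel₀ h1q.ne']
  have hQTr : QT * ((γ - 1) * A ^ 2) = γ * (bT * A - B * aT) := by
    rw [hQTd]; field_simp
    try ring
  have hQXr : QX * ((γ - 1) * A ^ 2) = γ * (bX * A - B * aX) := by
    rw [hQXd]; field_simp
    try ring
  have hQYr : QY * ((γ - 1) * A ^ 2) = γ * (bY * A - B * aY) := by
    rw [hQYd]; field_simp
    try ring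
  have hSTr : ST * (B * A) = bT * A - γ * (aT * B) := by
    rw [hSTd]; field_simp
    try ring
  have hSXr : SX * (B * A) = bX * A - γ * (aX * B) := by
    rw [hSXd]; field_simp
    try ring
  have hSYr : SY * (B * A) = bY * A - γ * (aY * B) := by
    rw [hSYd]; field_simp
    try ring
  rw [← add_div, ← add_div, div_eq_iff hγ0, zero_mul]
  refine mul_left_cancel₀ (mul_ne_zero (mul_ne_zero hG0 hB0) hA0) ?_
  linear_combination
    ((γ - 1) * A ^ 2 * H0 * G - G * B * A * S0) * hM
    + (γ - 1) * A ^ 2 * G ^ 2 * U * hXe + (γ - 1) * A ^ 2 * G ^ 2 * V * hYe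
    + (γ - 1) * A ^ 2 * G ^ 2 * W3 * hZe - (γ - 1) * A ^ 2 * G ^ 2 * hEe
    + ((γ - 1) * A ^ 2 * (((aT + U * aX + V * aY) * H0 + A * (QT + U * QX + V * QY)) * G ^ 2
      + 2 * A * H0 * G * (G ^ 3 * (U * (uT + U * uX + V * uY) + V * (vT + U * vX + V * vY)
          + W3 * (wT + U * wX + V * wY)))
      + A * H0 * G ^ 2 * (uX + vY))) * hrel
    + (A * G ^ 2) * hQTr + (A * G ^ 2 * U) * hQXr + (A * G ^ 2 * V) * hQYr
    - (G ^ 2 * A) * hSTr - (G ^ 2 * A * U) * hSXr - (G ^ 2 * A * V) * hSYr
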